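/- Let α > −1 and let f be a nonnegative locally integrable function on the upper half plane. Then the maximal Bergman projection satisfies the pointwise bound P⁺_α f(z) ≤ C Σ_{β ∈ {0,1/3}} Q^β_α f(z) for all z ∈ ℋ, where C depends only on α. -/

import Mathlib

open MeasureTheory

noncomputable section

/-- The upper half plane. -/
def UHP : Set ℂ := {z | 0 < z.im}

/-- The Carleson box `Q_{[a,b)} = [a,b) × (0, b-a]` in the upper half plane. -/
def cbox (a b : ℝ) : Set ℂ := {z | a ≤ z.re ∧ z.re < b ∧ 0 < z.im ∧ z.im ≤ b - a}

/-- The Carleson box over the interval of the shifted dyadic grid `𝒟^β` with parameters `j, m`. -/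
def gridbox (β : ℝ) (j m : ℤ) : Set ℂ :=
  cbox ((2:ℝ)^j * ((m : ℝ) + (-1:ℝ)^j * β)) ((2:ℝ)^j * ((m : ℝ) + 1 + (-1:ℝ)^j * β))

/-- The maximal Bergman projection `P⁺_α f(z) = ∫_ℋ f(ξ) |z-ξ̄|^{-(2+α)} (Im ξ)^α dA(ξ)`. -/
def maxBergman (α : ℝ) (f : ℂ → ℝ) (z : ℂ) : ℝ :=
  ∫ ξ in UHP, f ξ / ‖z - (starRingEnd ℂ) ξ‖ ^ (2 + α) * ξ.im ^ α

/-- The dyadic model operator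
`Q^β_α f = Σ_{I ∈ 𝒟^β} ⟨f, 1_{Q_I}/|I|^{2+α}⟩_α 1_{Q_I}`. -/
def dyadicOp (α β : ℝ) (f : ℂ → ℝ) (z : ℂ) : ℝ :=
  ∑' (j : ℤ) (m : ℤ),
    (gridbox β j m).indicator
      (fun _ => (∫ ξ in gridbox β j m, f ξ * ξ.im ^ α) / ((2:ℝ)^j) ^ (2 + α)) z
/-!
Split `ℋ` into the annuli `2^k ≤ |z - ξ̄| < 2^(k+1)`. On the `k`-th annulus the kernel is at most
`2^(-k(2+α))`, and by the one-third trick the annulus lies in a Carleson box of side `2^(k+4)`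
containing `z` from `𝒟⁰` or `𝒟^{1/3}`. Its contribution is therefore at most `2^(4(2+α))` times
the scale-`2^(k+4)` term of `Q⁰_α f(z) + Q^{1/3}_α f(z)`, and summing over `k` gives the bound with
`C = 2^(4(2+α))`.

Both sides are real-valued with junk value `0`: a divergent Bergman integral is `0`, and for a
convergent one the dyadic sums converge because the boxes around `z` that contain `ξ` have side
`≳ |z - ξ̄|` and hence geometrically decaying weights `≲ |z - ξ̄|^(-(2+α))`.
-/

open ComplexConjugate Set
open scoped Function

lemma measurableSet_UHP : MeasurableSet UHP :=
  measurableSet_lt measurable_const Complex.measurable_im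

lemma measurableSet_cbox (a b : ℝ) : MeasurableSet (cbox a b) := by
  have : cbox a b = Complex.re ⁻¹' Ico a b ∩ Complex.im ⁻¹' Ioc 0 (b - a) := by
    ext w; simp [cbox, and_assoc]
  rw [this]
  exact (measurableSet_Ico.preimage Complex.measurable_re).inter
    (measurableSet_Ioc.preimage Complex.measurable_im)

lemma im_add_im_le_norm_sub_conj (z ξ : ℂ) : z.im + ξ.im ≤ ‖z - conj ξ‖ := by
  simpa using (le_abs_self _).trans (Complex.abs_im_le_norm (z - conj ξ))

lemma abs_re_sub_le_norm_sub_conj (z ξ : ℂ) : |z.re - ξ.re| ≤ ‖z - conj ξ‖ := by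
  simpa using Complex.abs_re_le_norm (z - conj ξ)

lemma norm_sub_conj_pos {z ξ : ℂ} (hz : 0 ≤ z.im) (hξ : 0 < ξ.im) : 0 < ‖z - conj ξ‖ :=
  (add_pos_of_nonneg_of_pos hz hξ).trans_le (im_add_im_le_norm_sub_conj z ξ)

lemma norm_sub_conj_le_of_mem_cbox {a b : ℝ} {w ξ : ℂ} (hw : w ∈ cbox a b) (hξ : ξ ∈ cbox a b) :
    ‖w - conj ξ‖ ≤ 3 * (b - a) := by
  obtain ⟨hw₁, hw₂, hw₃, hw₄⟩ := hw
  obtain ⟨hξ₁, hξ₂, hξ₃, hξ₄⟩ := hξ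
  have hre : |w.re - ξ.re| ≤ b - a := abs_le.mpr ⟨by linarith, by linarith⟩
  have := Complex.norm_le_abs_re_add_abs_im (w - conj ξ)
  simp only [Complex.sub_re, Complex.conj_re, Complex.sub_im, Complex.conj_im, sub_neg_eq_add,
    abs_of_pos (add_pos hw₃ hξ₃)] at this
  linarith

/-- `x ∈ 2^j([0,1) + m + (-1)^j β)` for `m = gridIndex β j x`. -/
def gridIndex (β : ℝ) (j : ℤ) (x : ℝ) : ℤ := ⌊x / 2 ^ j - (-1) ^ j * β⌋

lemma mem_gridbox_iff {β : ℝ} {j m : ℤ} {w : ℂ} :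
    w ∈ gridbox β j m ↔ gridIndex β j w.re = m ∧ 0 < w.im ∧ w.im ≤ 2 ^ j := by
  have h2j : (0:ℝ) < 2 ^ j := zpow_pos two_pos j
  simp only [gridbox, cbox, gridIndex, Int.floor_eq_iff, le_sub_iff_add_le,
    sub_lt_iff_lt_add, le_div_iff₀ h2j, div_lt_iff₀ h2j]
  constructor
  · rintro ⟨h₁, h₂, h₃, h₄⟩
    exact ⟨⟨by linarith, by linarith⟩, h₃, by linarith⟩
  · rintro ⟨⟨h₁, h₂⟩, h₃, h₄⟩
    exact ⟨by linarith, by linarith, h₃, by linarith⟩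

lemma floor_eq_of_abs_sub_le {s t ε : ℝ} {n : ℤ} (hl : n + ε ≤ t) (hr : t < n + 1 - ε)
    (hst : |s - t| ≤ ε) : ⌊s⌋ = n := by
  have := abs_le.mp hst
  rw [Int.floor_eq_iff]
  constructor <;> linarith

/-- The one-third trick. -/
lemma exists_shift_floor_margin (t σ : ℝ) (hσ : σ = 1 ∨ σ = -1) :
    ∃ β ∈ ({0, 1/3} : Set ℝ), ∃ n : ℤ, n + 1/8 ≤ t - σ * β ∧ t - σ * β < n + 1 - 1/8 := by
  have h₀ := Int.floor_le t
  have h₁ := Int.lt_floor_add_one t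
  by_cases hmid : ⌊t⌋ + 1/8 ≤ t ∧ t < ⌊t⌋ + 1 - 1/8
  · exact ⟨0, by simp, ⌊t⌋, by simpa using hmid⟩
  have hedge : t < ⌊t⌋ + 1/8 ∨ ⌊t⌋ + 1 - 1/8 ≤ t := by
    by_contra! h
    exact hmid h
  refine ⟨1/3, by simp, ?_⟩
  rcases hσ with rfl | rfl <;> rcases hedge with hedge | hedge
  · exact ⟨⌊t⌋ - 1, by push_cast; constructor <;> linarith⟩
  · exact ⟨⌊t⌋, by constructor <;> linarith⟩
  · exact ⟨⌊t⌋, by constructor <;> linarith⟩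
  · exact ⟨⌊t⌋ + 1, by push_cast; constructor <;> linarith⟩

lemma neg_one_zpow_eq_one_or (j : ℤ) : (-1 : ℝ) ^ j = 1 ∨ (-1 : ℝ) ^ j = -1 :=
  (Int.even_or_odd j).imp Even.neg_one_zpow Odd.neg_one_zpow

lemma exists_gridIndex_eq (j : ℤ) (x : ℝ) :
    ∃ β ∈ ({0, 1/3} : Set ℝ), ∀ y, |y - x| ≤ 2 ^ j / 8 → gridIndex β j y = gridIndex β j x := by
  have h2j : (0:ℝ) < 2 ^ j := zpow_pos two_pos j
  obtain ⟨β, hβ, n, hl, hr⟩ := exists_shift_floor_margin (x / 2 ^ j) _ (neg_one_zpow_eq_one_or j)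
  have hn : ∀ y, |y - x| ≤ 2 ^ j / 8 → gridIndex β j y = n := fun y hy ↦ by
    refine floor_eq_of_abs_sub_le hl hr ?_
    rw [sub_sub_sub_cancel_right, ← sub_div, abs_div, abs_of_pos h2j, div_le_iff₀ h2j]
    linarith
  exact ⟨β, hβ, fun y hy ↦ (hn y hy).trans (hn x (by simp; positivity)).symm⟩

/-- The box of `𝒟^β` of side `2^j` containing `z`; it is empty when `z` lies above all of them. -/
def containingBox (β : ℝ) (j : ℤ) (z : ℂ) : Set ℂ :=
  {ξ | ∃ m, z ∈ gridbox β j m ∧ ξ ∈ gridbox β j m}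

section containingBox

variable {β : ℝ} {j m : ℤ} {z : ℂ}

lemma containingBox_eq (hz : z ∈ gridbox β j m) : containingBox β j z = gridbox β j m := by
  ext ξ
  refine ⟨fun ⟨m', hz', hξ⟩ ↦ ?_, fun hξ ↦ ⟨m, hz, hξ⟩⟩
  rwa [← (mem_gridbox_iff.mp hz').1.symm.trans (mem_gridbox_iff.mp hz).1]

lemma containingBox_eq_empty (hz : ∀ m, z ∉ gridbox β j m) : containingBox β j z = ∅ :=
  eq_empty_iff_forall_notMem.mpr fun _ ⟨m, hzm, _⟩ ↦ hz m hzm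

lemma measurableSet_containingBox : MeasurableSet (containingBox β j z) := by
  by_cases hz : ∃ m, z ∈ gridbox β j m
  · obtain ⟨m, hm⟩ := hz
    rw [containingBox_eq hm]
    exact measurableSet_cbox _ _
  · rw [containingBox_eq_empty (not_exists.mp hz)]
    exact MeasurableSet.empty

lemma containingBox_subset_UHP : containingBox β j z ⊆ UHP :=
  fun _ ⟨_, _, hξ⟩ ↦ (mem_gridbox_iff.mp hξ).2.1

lemma norm_sub_conj_le_of_mem_containingBox {ξ : ℂ} (hξ : ξ ∈ containingBox β j z) :
    ‖z - conj ξ‖ ≤ 3 * 2 ^ j := by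
  obtain ⟨m, hz, hξ⟩ := hξ
  convert norm_sub_conj_le_of_mem_cbox hz hξ using 2
  ring

end containingBox

def dyadicTerm (α β : ℝ) (f : ℂ → ℝ) (z : ℂ) (j : ℤ) : ℝ :=
  ∑' m : ℤ, (gridbox β j m).indicator
    (fun _ => (∫ ξ in gridbox β j m, f ξ * ξ.im ^ α) / ((2:ℝ)^j) ^ (2 + α)) z

section dyadicTerm

variable {α β : ℝ} {f : ℂ → ℝ} {z : ℂ}

lemma dyadicOp_eq_tsum_dyadicTerm_add (n : ℤ) :
    dyadicOp α β f z = ∑' k : ℤ, dyadicTerm α β f z (k + n) :=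
  ((Equiv.addRight n).tsum_eq (dyadicTerm α β f z)).symm

lemma dyadicTerm_eq (j : ℤ) :
    dyadicTerm α β f z j =
      (∫ ξ in containingBox β j z, f ξ * ξ.im ^ α) / ((2:ℝ) ^ j) ^ (2 + α) := by
  by_cases hz : ∃ m, z ∈ gridbox β j m
  · obtain ⟨m, hm⟩ := hz
    rw [dyadicTerm, tsum_eq_single m, indicator_of_mem hm, containingBox_eq hm]
    intro m' hm'
    refine indicator_of_notMem (fun hz' ↦ hm' ?_) _
    exact (mem_gridbox_iff.mp hz').1.symm.trans (mem_gridbox_iff.mp hm).1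
  · rw [not_exists] at hz
    simp [dyadicTerm, indicator_of_notMem (hz _), containingBox_eq_empty hz]

lemma dyadicTerm_nonneg (hf : ∀ ξ, 0 ≤ f ξ) (j : ℤ) : 0 ≤ dyadicTerm α β f z j := by
  rw [dyadicTerm_eq]
  refine div_nonneg (setIntegral_nonneg measurableSet_containingBox fun ξ hξ ↦ ?_) (by positivity)
  exact mul_nonneg (hf ξ) (Real.rpow_nonneg (containingBox_subset_UHP hξ).le α)

lemma dyadicOp_nonneg (hf : ∀ ξ, 0 ≤ f ξ) : 0 ≤ dyadicOp α β f z :=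
  tsum_nonneg fun j ↦ dyadicTerm_nonneg hf j

end dyadicTerm

def bergmanIntegrand (α : ℝ) (f : ℂ → ℝ) (z ξ : ℂ) : ℝ :=
  f ξ / ‖z - conj ξ‖ ^ (2 + α) * ξ.im ^ α

section bergmanIntegrand

variable {α : ℝ} {f : ℂ → ℝ} {z : ℂ}

lemma weight_eq_rpow_mul_bergmanIntegrand {ξ : ℂ} (hξ : 0 < ‖z - conj ξ‖) :
    f ξ * ξ.im ^ α = ‖z - conj ξ‖ ^ (2 + α) * bergmanIntegrand α f z ξ := by
  have := (Real.rpow_pos_of_pos hξ (2 + α)).ne'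
  rw [bergmanIntegrand]
  field_simp

lemma bergmanIntegrand_nonneg (hf : ∀ ξ, 0 ≤ f ξ) {ξ : ℂ} (hξ : 0 ≤ ξ.im) :
    0 ≤ bergmanIntegrand α f z ξ := by
  unfold bergmanIntegrand
  have := hf ξ
  positivity

lemma integrableOn_weight_of_norm_sub_conj_le (hp : 0 ≤ 2 + α) (hz : 0 ≤ z.im)
    (hg : IntegrableOn (bergmanIntegrand α f z) UHP) {S : Set ℂ} (hS : MeasurableSet S)
    (hSU : S ⊆ UHP) {R : ℝ} (hR : ∀ ξ ∈ S, ‖z - conj ξ‖ ≤ R) :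
    IntegrableOn (fun ξ ↦ f ξ * ξ.im ^ α) S := by
  have hcont : Continuous fun ξ : ℂ ↦ ‖z - conj ξ‖ ^ (2 + α) := by fun_prop
  refine ((hg.mono_set hSU).bdd_mul (c := R ^ (2 + α)) hcont.aestronglyMeasurable ?_).congr ?_
  · filter_upwards [ae_restrict_mem hS] with ξ hξ
    rw [Real.norm_of_nonneg (by positivity)]
    exact Real.rpow_le_rpow (norm_nonneg _) (hR ξ hξ) hp
  · filter_upwards [ae_restrict_mem hS] with ξ hξ
    exact (weight_eq_rpow_mul_bergmanIntegrand (norm_sub_conj_pos hz (hSU hξ))).symm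

end bergmanIntegrand

lemma sum_zpow_le_of_forall_le {q : ℝ} (hq₀ : 0 < q) (hq₁ : q < 1) {u : Finset ℤ} {j₀ : ℤ}
    (hu : ∀ j ∈ u, j₀ ≤ j) : ∑ j ∈ u, q ^ j ≤ q ^ j₀ * (1 - q)⁻¹ := by
  have hinj : Set.InjOn (fun j ↦ (j - j₀).toNat) u := fun x hx y hy hxy ↦ by
    have := hu x hx; have := hu y hy; simp only at hxy; omega
  calc ∑ j ∈ u, q ^ j = ∑ n ∈ u.image (fun j ↦ (j - j₀).toNat), q ^ j₀ * q ^ n := by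
        rw [Finset.sum_image hinj]
        refine Finset.sum_congr rfl fun j hj ↦ ?_
        rw [← zpow_natCast, Int.toNat_of_nonneg (sub_nonneg.mpr (hu j hj)), ← zpow_add₀ hq₀.ne',
          add_sub_cancel]
    _ = q ^ j₀ * ∑ n ∈ u.image (fun j ↦ (j - j₀).toNat), q ^ n := by rw [Finset.mul_sum]
    _ ≤ q ^ j₀ * ∑' n : ℕ, q ^ n := by
        gcongr
        exact Summable.sum_le_tsum _ (fun n _ ↦ by positivity)
          (summable_geometric_of_lt_one hq₀.le hq₁)
    _ = q ^ j₀ * (1 - q)⁻¹ := by rw [tsum_geometric_of_lt_one hq₀.le hq₁]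

lemma two_zpow_rpow_neg (p : ℝ) (j : ℤ) : ((2:ℝ) ^ j) ^ (-p) = ((2:ℝ) ^ (-p)) ^ j := by
  rw [← Real.rpow_intCast, ← Real.rpow_intCast, ← Real.rpow_mul zero_le_two,
    ← Real.rpow_mul zero_le_two, mul_comm]

lemma sum_two_zpow_rpow_neg_le {p R : ℝ} (hp : 0 < p) (hR : 0 < R) (u : Finset ℤ) :
    ∑ j ∈ u with R ≤ 2 ^ j, ((2:ℝ) ^ j) ^ (-p) ≤ (1 - 2 ^ (-p))⁻¹ * R ^ (-p) := by
  have hq₀ : (0:ℝ) < 2 ^ (-p) := by positivity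
  have hq₁ : (2:ℝ) ^ (-p) < 1 := Real.rpow_lt_one_of_one_lt_of_neg one_lt_two (neg_neg_of_pos hp)
  rcases (u.filter (R ≤ 2 ^ ·)).eq_empty_or_nonempty with hempty | hne
  · rw [hempty, Finset.sum_empty]
    exact mul_nonneg (inv_nonneg.mpr (by linarith)) (by positivity)
  set j₀ := (u.filter (R ≤ 2 ^ ·)).min' hne
  have hj₀ : R ≤ 2 ^ j₀ := (Finset.mem_filter.mp (Finset.min'_mem _ hne)).2
  simp_rw [two_zpow_rpow_neg]
  calc _ ≤ (2 ^ (-p)) ^ j₀ * (1 - 2 ^ (-p))⁻¹ :=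
        sum_zpow_le_of_forall_le hq₀ hq₁ fun j hj ↦ Finset.min'_le _ j hj
    _ ≤ R ^ (-p) * (1 - 2 ^ (-p))⁻¹ := by
        rw [← two_zpow_rpow_neg]
        exact mul_le_mul_of_nonneg_right (Real.rpow_le_rpow_of_nonpos hR hj₀ (by linarith))
          (inv_nonneg.mpr (by linarith))
    _ = _ := mul_comm _ _

section summable

variable {α β : ℝ} {f : ℂ → ℝ} {z : ℂ}

/-- `ξ` lies in the box of side `2^j` around `z` only if `2^j ≥ ‖z - ξ̄‖/3`. -/
lemma sum_indicator_containingBox_le (hp : 0 < 2 + α) (hf : ∀ ξ, 0 ≤ f ξ) (hz : 0 ≤ z.im)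
    {ξ : ℂ} (hξ : 0 < ξ.im) (u : Finset ℤ) :
    ∑ j ∈ u, (containingBox β j z).indicator
        (fun ξ ↦ f ξ * ξ.im ^ α * ((2:ℝ) ^ j) ^ (-(2 + α))) ξ
      ≤ (1 - 2 ^ (-(2 + α)))⁻¹ * 3 ^ (2 + α) * bergmanIntegrand α f z ξ := by
  classical
  have hr : 0 < ‖z - conj ξ‖ := norm_sub_conj_pos hz hξ
  have hw : 0 ≤ f ξ * ξ.im ^ α := mul_nonneg (hf ξ) (by positivity)
  calc _ = ∑ j ∈ u with ξ ∈ containingBox β j z, f ξ * ξ.im ^ α * ((2:ℝ) ^ j) ^ (-(2 + α)) := by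
        simp only [Finset.sum_filter, indicator_apply]
    _ ≤ ∑ j ∈ u with ‖z - conj ξ‖ / 3 ≤ 2 ^ j, f ξ * ξ.im ^ α * ((2:ℝ) ^ j) ^ (-(2 + α)) := by
        refine Finset.sum_le_sum_of_subset_of_nonneg
          (Finset.monotone_filter_right _ fun j _ hj ↦ ?_) fun j _ _ ↦ by positivity
        linarith [norm_sub_conj_le_of_mem_containingBox hj]
    _ ≤ f ξ * ξ.im ^ α * ((1 - 2 ^ (-(2 + α)))⁻¹ * (‖z - conj ξ‖ / 3) ^ (-(2 + α))) := by
        rw [← Finset.mul_sum]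
        exact mul_le_mul_of_nonneg_left (sum_two_zpow_rpow_neg_le hp (by positivity) u) hw
    _ = _ := by
        have h3 : (‖z - conj ξ‖ / 3) ^ (-(2 + α)) = 3 ^ (2 + α) / ‖z - conj ξ‖ ^ (2 + α) := by
          rw [Real.rpow_neg (by positivity), Real.div_rpow hr.le (by norm_num), inv_div]
        have := (Real.rpow_pos_of_pos hr (2 + α)).ne'
        rw [weight_eq_rpow_mul_bergmanIntegrand hr, h3]
        field_simp

lemma summable_dyadicTerm (hp : 0 < 2 + α) (hf : ∀ ξ, 0 ≤ f ξ) (hz : 0 ≤ z.im)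
    (hg : IntegrableOn (bergmanIntegrand α f z) UHP) : Summable (dyadicTerm α β f z) := by
  set H : ℤ → ℂ → ℝ := fun j ↦ (containingBox β j z).indicator
    (fun ξ ↦ f ξ * ξ.im ^ α * ((2:ℝ) ^ j) ^ (-(2 + α)))
  have hH (j : ℤ) : IntegrableOn (H j) UHP :=
    (IntegrableOn.integrable_indicator
      ((integrableOn_weight_of_norm_sub_conj_le hp.le hz hg measurableSet_containingBox
        containingBox_subset_UHP fun _ ↦ norm_sub_conj_le_of_mem_containingBox).mul_const _)
      measurableSet_containingBox).integrableOn
  have hT (j : ℤ) : dyadicTerm α β f z j = ∫ ξ in UHP, H j ξ := by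
    rw [dyadicTerm_eq, setIntegral_indicator measurableSet_containingBox,
      inter_eq_right.mpr containingBox_subset_UHP, integral_mul_const,
      Real.rpow_neg (by positivity), div_eq_mul_inv]
  refine summable_of_sum_le (c := (1 - 2 ^ (-(2 + α)))⁻¹ * 3 ^ (2 + α) *
    ∫ ξ in UHP, bergmanIntegrand α f z ξ) (fun j ↦ dyadicTerm_nonneg hf j) fun u ↦ ?_
  calc ∑ j ∈ u, dyadicTerm α β f z j = ∫ ξ in UHP, ∑ j ∈ u, H j ξ := by
        rw [integral_finsetSum u fun j _ ↦ hH j]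
        exact Finset.sum_congr rfl fun j _ ↦ hT j
    _ ≤ ∫ ξ in UHP, (1 - 2 ^ (-(2 + α)))⁻¹ * 3 ^ (2 + α) * bergmanIntegrand α f z ξ :=
        setIntegral_mono_on (integrable_finsetSum u fun j _ ↦ hH j) (hg.const_mul _)
          measurableSet_UHP fun ξ hξ ↦ sum_indicator_containingBox_le hp hf hz hξ u
    _ = _ := integral_const_mul _ _

end summable

def annulus (z : ℂ) (k : ℤ) : Set ℂ :=
  UHP ∩ (fun ξ ↦ ‖z - conj ξ‖) ⁻¹' Ico (2 ^ k) (2 ^ (k + 1))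

lemma pairwise_disjoint_Ico_two_zpow :
    Pairwise (Disjoint on fun k : ℤ ↦ Ico ((2:ℝ) ^ k) (2 ^ (k + 1))) := by
  intro k l _
  rw [Function.onFun, Set.disjoint_left]
  rintro x ⟨hk₁, hk₂⟩ ⟨hl₁, hl₂⟩
  have := (zpow_lt_zpow_iff_right₀ one_lt_two).mp (hk₁.trans_lt hl₂)
  have := (zpow_lt_zpow_iff_right₀ one_lt_two).mp (hl₁.trans_lt hk₂)
  omega

section annulus

variable {α : ℝ} {f : ℂ → ℝ} {z : ℂ}

lemma measurableSet_annulus (k : ℤ) : MeasurableSet (annulus z k) :=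
  measurableSet_UHP.inter (measurableSet_Ico.preimage (by fun_prop))

lemma pairwise_disjoint_annulus : Pairwise (Disjoint on annulus z) := fun _ _ hkl ↦
  ((pairwise_disjoint_Ico_two_zpow hkl).preimage _).mono inter_subset_right inter_subset_right

lemma iUnion_annulus (hz : 0 ≤ z.im) : ⋃ k, annulus z k = UHP := by
  refine (iUnion_subset fun k ↦ inter_subset_left).antisymm fun ξ hξ ↦ ?_
  obtain ⟨k, hk⟩ := exists_mem_Ico_zpow (norm_sub_conj_pos hz hξ) one_lt_two
  exact mem_iUnion.mpr ⟨k, hξ, hk⟩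

lemma hasSum_setIntegral_annulus (hz : 0 ≤ z.im)
    (hg : IntegrableOn (bergmanIntegrand α f z) UHP) :
    HasSum (fun k ↦ ∫ ξ in annulus z k, bergmanIntegrand α f z ξ) (maxBergman α f z) := by
  rw [← iUnion_annulus hz] at hg
  have := hasSum_integral_iUnion measurableSet_annulus pairwise_disjoint_annulus hg
  rwa [iUnion_annulus hz] at this

/-- Since the annulus has radius `2^(k+1) = 2^(k+4)/8`, the one-third trick fits it in a box
of side `2^(k+4)` around `z`. -/
lemma exists_annulus_subset_containingBox (hz : 0 < z.im) (k : ℤ) :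
    ∃ β ∈ ({0, 1/3} : Set ℝ), annulus z k ⊆ containingBox β (k + 4) z := by
  obtain ⟨β, hβ, hidx⟩ := exists_gridIndex_eq (k + 4) z.re
  refine ⟨β, hβ, fun ξ ⟨hξ, _, hr⟩ ↦ ?_⟩
  have hξ : 0 < ξ.im := hξ
  have h8 : (2:ℝ) ^ (k + 1) = 2 ^ (k + 4) / 8 := by
    rw [zpow_add₀ two_ne_zero, zpow_add₀ two_ne_zero]; ring
  have : (0:ℝ) < 2 ^ (k + 4) := by positivity
  have := im_add_im_le_norm_sub_conj z ξ
  have := abs_re_sub_le_norm_sub_conj z ξ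
  refine ⟨gridIndex β (k + 4) z.re, mem_gridbox_iff.mpr ⟨rfl, hz, by linarith⟩,
    mem_gridbox_iff.mpr ⟨hidx ξ.re ?_, hξ, by linarith⟩⟩
  rw [abs_sub_comm]
  linarith

lemma two_zpow_rpow_neg_eq_div (p : ℝ) (k n : ℤ) :
    ((2:ℝ) ^ k) ^ (-p) = 2 ^ (n * p) / ((2:ℝ) ^ (k + n)) ^ p := by
  rw [← Real.rpow_intCast 2 k, ← Real.rpow_intCast 2 (k + n), ← Real.rpow_mul zero_le_two,
    ← Real.rpow_mul zero_le_two, ← Real.rpow_sub two_pos]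
  push_cast
  ring_nf

lemma setIntegral_annulus_le_dyadicTerm (hp : 0 ≤ 2 + α) (hf : ∀ ξ, 0 ≤ f ξ) (hz : 0 ≤ z.im)
    (hg : IntegrableOn (bergmanIntegrand α f z) UHP) {β : ℝ} {k : ℤ}
    (hsub : annulus z k ⊆ containingBox β (k + 4) z) :
    ∫ ξ in annulus z k, bergmanIntegrand α f z ξ
      ≤ 2 ^ (4 * (2 + α)) * dyadicTerm α β f z (k + 4) := by
  have hw := integrableOn_weight_of_norm_sub_conj_le hp hz hg measurableSet_containingBox
    containingBox_subset_UHP fun _ ↦ norm_sub_conj_le_of_mem_containingBox (β := β) (j := k + 4)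
  calc ∫ ξ in annulus z k, bergmanIntegrand α f z ξ
      ≤ ∫ ξ in annulus z k, f ξ * ξ.im ^ α * ((2:ℝ) ^ k) ^ (-(2 + α)) := by
        refine setIntegral_mono_on (hg.mono_set inter_subset_left) ((hw.mono_set hsub).mul_const _)
          (measurableSet_annulus k) fun ξ ⟨hξ, hr, _⟩ ↦ ?_
        have hr₀ := norm_sub_conj_pos hz hξ
        rw [weight_eq_rpow_mul_bergmanIntegrand hr₀, mul_comm _ (bergmanIntegrand α f z ξ),
          mul_assoc]
        refine le_mul_of_one_le_right (bergmanIntegrand_nonneg hf hξ.le) ?_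
        rw [Real.rpow_neg (by positivity), ← div_eq_mul_inv, one_le_div (by positivity)]
        exact Real.rpow_le_rpow (by positivity) hr hp
    _ = ((2:ℝ) ^ k) ^ (-(2 + α)) * ∫ ξ in annulus z k, f ξ * ξ.im ^ α := by
        rw [integral_mul_const, mul_comm]
    _ ≤ ((2:ℝ) ^ k) ^ (-(2 + α)) * ∫ ξ in containingBox β (k + 4) z, f ξ * ξ.im ^ α := by
        refine mul_le_mul_of_nonneg_left (setIntegral_mono_set hw ?_ hsub.eventuallyLE)
          (by positivity)
        filter_upwards [ae_restrict_mem measurableSet_containingBox] with ξ hξ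
        exact mul_nonneg (hf ξ) (Real.rpow_nonneg (containingBox_subset_UHP hξ).le α)
    _ = 2 ^ (4 * (2 + α)) * dyadicTerm α β f z (k + 4) := by
        rw [dyadicTerm_eq, two_zpow_rpow_neg_eq_div _ k 4]
        push_cast
        ring

lemma setIntegral_annulus_le (hp : 0 ≤ 2 + α) (hf : ∀ ξ, 0 ≤ f ξ) (hz : 0 < z.im)
    (hg : IntegrableOn (bergmanIntegrand α f z) UHP) (k : ℤ) :
    ∫ ξ in annulus z k, bergmanIntegrand α f z ξ
      ≤ 2 ^ (4 * (2 + α)) * (dyadicTerm α 0 f z (k + 4) + dyadicTerm α (1/3) f z (k + 4)) := by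
  obtain ⟨β, hβ, hsub⟩ := exists_annulus_subset_containingBox hz k
  refine (setIntegral_annulus_le_dyadicTerm hp hf hz.le hg hsub).trans
    (mul_le_mul_of_nonneg_left ?_ (by positivity))
  rcases hβ with rfl | rfl
  · exact le_add_of_nonneg_right (dyadicTerm_nonneg hf _)
  · exact le_add_of_nonneg_left (dyadicTerm_nonneg hf _)

end annulus

/-- pointwise domination of the maximal Bergman projection by the two
dyadic model operators. -/
theorem maxBergman_le_dyadic (α : ℝ) (hα : -1 < α) :
    ∃ C > 0, ∀ f : ℂ → ℝ, (∀ ξ, 0 ≤ f ξ) → LocallyIntegrableOn f UHP →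
      ∀ z ∈ UHP, maxBergman α f z ≤ C * (dyadicOp α 0 f z + dyadicOp α (1/3) f z) := by
  have hp : 0 < 2 + α := by linarith
  refine ⟨2 ^ (4 * (2 + α)), by positivity, fun f hf _ z hz ↦ ?_⟩
  have hz : 0 < z.im := hz
  by_cases hg : IntegrableOn (bergmanIntegrand α f z) UHP
  swap
  · show ∫ ξ in UHP, bergmanIntegrand α f z ξ ≤ _
    rw [integral_undef hg]
    exact mul_nonneg (by positivity) (add_nonneg (dyadicOp_nonneg hf) (dyadicOp_nonneg hf))
  have hsum := hasSum_setIntegral_annulus hz.le hg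
  have hT (β : ℝ) : Summable fun k : ℤ ↦ dyadicTerm α β f z (k + 4) :=
    (summable_dyadicTerm hp hf hz.le hg).comp_injective (add_left_injective 4)
  calc maxBergman α f z = ∑' k, ∫ ξ in annulus z k, bergmanIntegrand α f z ξ := hsum.tsum_eq.symm
    _ ≤ ∑' k : ℤ, 2 ^ (4 * (2 + α)) *
          (dyadicTerm α 0 f z (k + 4) + dyadicTerm α (1/3) f z (k + 4)) :=
        hsum.summable.tsum_le_tsum (setIntegral_annulus_le hp.le hf hz hg)
          (((hT 0).add (hT (1/3))).mul_left _)
    _ = 2 ^ (4 * (2 + α)) * (dyadicOp α 0 f z + dyadicOp α (1/3) f z) := by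
        rw [tsum_mul_left, (hT 0).tsum_add (hT (1/3)), dyadicOp_eq_tsum_dyadicTerm_add 4,
          dyadicOp_eq_tsum_dyadicTerm_add 4]
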